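/- Let M ∈ ℝ^{m×d} satisfy the Ω-null space property of order s with constant 0 < ρ < 1 relative to Ω ∈ ℝ^{p×d}. Then for any x ∈ ℝ^d and any minimizer x̂ of ‖Ωz‖₁ subject to Mz = Mx, it holds ‖Ω(x − x̂)‖₁ ≤ (2(1+ρ)/(1−ρ))·σ_s(Ωx)₁. -/
import Mathlib


noncomputable section

def l1 {n : ℕ} (v : Fin n → ℝ) : ℝ := ∑ i, |v i|

def l1S {n : ℕ} (v : Fin n → ℝ) (Λ : Finset (Fin n)) : ℝ := ∑ i ∈ Λ, |v i|

def mulVec' {m d : ℕ} (M : Fin m → Fin d → ℝ) (x : Fin d → ℝ) : Fin m → ℝ :=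
  fun i => ∑ j, M i j * x j

/-- `M` satisfies the `Ω`-null space property of order `s` with constant `ρ`. -/
def OmegaNSP {m d p : ℕ} (M : Fin m → Fin d → ℝ) (Ω : Fin p → Fin d → ℝ)
    (s : ℕ) (ρ : ℝ) : Prop :=
  ∀ Λ : Finset (Fin p), p - s ≤ Λ.card →
    ∀ v : Fin d → ℝ, mulVec' M v = 0 →
      l1S (mulVec' Ω v) Λᶜ ≤ ρ * l1S (mulVec' Ω v) Λ

/-- ℓ¹-error of best `s`-term approximation. -/
def sigma1 {n : ℕ} (u : Fin n → ℝ) (s : ℕ) : ℝ :=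
  sInf {r : ℝ | ∃ w : Fin n → ℝ,
    (Finset.univ.filter (fun i => w i ≠ 0)).card ≤ s ∧ r = l1 (u - w)}

lemma mulVec'_sub {m d : ℕ} (M : Fin m → Fin d → ℝ) (x y : Fin d → ℝ) :
    mulVec' M (x - y) = mulVec' M x - mulVec' M y := by
  funext i
  simp [mulVec', mul_sub, Finset.sum_sub_distrib]

lemma l1_eq_l1S_add {n : ℕ} (v : Fin n → ℝ) (S : Finset (Fin n)) :
    l1 v = l1S v S + l1S v Sᶜ := by
  simp [l1, l1S, Finset.sum_add_sum_compl]

lemma l1S_nonneg {n : ℕ} (v : Fin n → ℝ) (S : Finset (Fin n)) : 0 ≤ l1S v S :=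
  Finset.sum_nonneg fun _ _ => abs_nonneg _

theorem nsp_l1_error_bound {m d p s : ℕ}
    (M : Fin m → Fin d → ℝ) (Ω : Fin p → Fin d → ℝ) (ρ : ℝ)
    (hρ0 : 0 < ρ) (hρ1 : ρ < 1) (hNSP : OmegaNSP M Ω s ρ)
    (x xhat : Fin d → ℝ)
    (hfeas : mulVec' M xhat = mulVec' M x)
    (hmin : ∀ z : Fin d → ℝ, mulVec' M z = mulVec' M x →
      l1 (mulVec' Ω xhat) ≤ l1 (mulVec' Ω z)) :
    l1 (mulVec' Ω (x - xhat)) ≤ 2 * (1 + ρ) / (1 - ρ) * sigma1 (mulVec' Ω x) s := by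
  set C : ℝ := 2 * (1 + ρ) / (1 - ρ) with hC
  have hρ1' : (0:ℝ) < 1 - ρ := by linarith
  have hCpos : 0 < C := by
    apply div_pos; linarith; linarith
  set u := mulVec' Ω x with hu
  set h := mulVec' Ω xhat with hh
  set v := mulVec' Ω (x - xhat) with hv
  have hvuh : v = u - h := by rw [hv, hu, hh, mulVec'_sub]
  have key : ∀ w : Fin p → ℝ, (Finset.univ.filter (fun i => w i ≠ 0)).card ≤ s →
      l1 v ≤ C * l1 (u - w) := by
    intro w hw
    set S := Finset.univ.filter (fun i => w i ≠ 0) with hS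
    have hΛ : p - s ≤ (Sᶜ).card := by
      rw [Finset.card_compl, Fintype.card_fin]
      exact Nat.sub_le_sub_left hw p
    have hMv : mulVec' M (x - xhat) = 0 := by
      rw [mulVec'_sub, hfeas]; simp
    have hNSPv := hNSP Sᶜ hΛ (x - xhat) hMv
    rw [compl_compl, ← hv] at hNSPv
    -- hNSPv : l1S v S ≤ ρ * l1S v Sᶜ
    have h1 : l1S v Sᶜ ≤ l1S h Sᶜ + l1S u Sᶜ := by
      rw [hvuh]
      calc l1S (u - h) Sᶜ ≤ ∑ i ∈ Sᶜ, (|h i| + |u i|) := by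
            refine Finset.sum_le_sum fun i _ => ?_
            calc |(u - h) i| = |u i - h i| := rfl
              _ ≤ |u i| + |h i| := abs_sub _ _
              _ = |h i| + |u i| := add_comm _ _
        _ = l1S h Sᶜ + l1S u Sᶜ := by simp [l1S, Finset.sum_add_distrib]
    have h2 : l1 h ≤ l1 u := hmin x rfl
    have h3 : l1S u S ≤ l1S v S + l1S h S := by
      rw [hvuh]
      calc l1S u S ≤ ∑ i ∈ S, (|(u - h) i| + |h i|) := by
            refine Finset.sum_le_sum fun i _ => ?_
            have : u i = (u i - h i) + h i := by ring
            calc |u i| = |(u i - h i) + h i| := by rw [← this]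
              _ ≤ |u i - h i| + |h i| := abs_add_le _ _
              _ = |(u - h) i| + |h i| := rfl
        _ = l1S (u - h) S + l1S h S := by
            simp [l1S, Finset.sum_add_distrib]
    have h4 : l1S u Sᶜ ≤ l1 (u - w) := by
      calc l1S u Sᶜ = l1S (u - w) Sᶜ := by
            refine Finset.sum_congr rfl fun i hi => ?_
            simp only [hS, Finset.mem_compl, Finset.mem_filter, Finset.mem_univ,
              true_and, not_not] at hi
            simp [hi]
        _ ≤ l1 (u - w) := by
            rw [l1_eq_l1S_add (u - w) Sᶜ]
            have := l1S_nonneg (u - w) Sᶜᶜ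
            linarith
    have hdecu : l1 u = l1S u S + l1S u Sᶜ := l1_eq_l1S_add u S
    have hdech : l1 h = l1S h S + l1S h Sᶜ := l1_eq_l1S_add h S
    have hdecv : l1 v = l1S v S + l1S v Sᶜ := l1_eq_l1S_add v S
    -- b ≤ a + 2σ, a ≤ ρ b  ⇒ (1-ρ) b ≤ 2σ
    have hσ : (1 - ρ) * l1S v Sᶜ ≤ 2 * l1S u Sᶜ := by nlinarith [l1S_nonneg v Sᶜ]
    rw [hC, div_mul_eq_mul_div, le_div_iff₀ hρ1']
    nlinarith [l1S_nonneg v Sᶜ, l1S_nonneg u Sᶜ, h4, hNSPv]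
  have hne : {r : ℝ | ∃ w : Fin p → ℝ,
      (Finset.univ.filter (fun i => w i ≠ 0)).card ≤ s ∧ r = l1 (u - w)}.Nonempty :=
    ⟨l1 (u - 0), 0, by simp, rfl⟩
  have hdiv : l1 v / C ≤ sigma1 u s := by
    refine le_csInf hne ?_
    rintro r ⟨w, hw, rfl⟩
    rw [div_le_iff₀ hCpos]
    calc l1 v ≤ C * l1 (u - w) := key w hw
      _ = l1 (u - w) * C := mul_comm _ _
  rw [div_le_iff₀ hCpos] at hdiv
  calc l1 v ≤ sigma1 u s * C := hdiv
    _ = C * sigma1 u s := mul_comm _ _
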